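/- Let X, Y ∈ ℝⁿ ⊂ ℂⁿ be orthonormal vectors and set W = (X + i·Y)/√2 (an 𝔄-isotropic singular unit vector). Then the Jacobi operator R_W satisfies: R_W(W) = 0 and R_W(Z) = 0 for every Z in the complex line ℂ·(i·X + Y); R_W(Z) = Z for every Z ∈ ℂⁿ with ⟨Z,X⟩ = 0 and ⟨Z,Y⟩ = 0 (complex inner products); and R_W(i·W) = 4·i·W. In other words, the eigenvalues of R_W are 0, 1 and 4 with eigenspaces ℝW ⊕ ℂ(JX+Y), ℂⁿ ⊖ (ℂX ⊕ ℂY) and ℝJW respectively. -/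

import Mathlib

noncomputable section

/-- The real inner product `g(X,Y) = Re⟨X,Y⟩` on `ℂⁿ`. -/
def gQ {n : ℕ} (X Y : EuclideanSpace ℂ (Fin n)) : ℝ :=
  (inner ℂ X Y : ℂ).re

/-- The Kähler structure `J` (multiplication by `i`). -/
def JQ {n : ℕ} (X : EuclideanSpace ℂ (Fin n)) : EuclideanSpace ℂ (Fin n) :=
  Complex.I • X

/-- The complex conjugation `A` (coordinatewise conjugation). -/
def AQ {n : ℕ} (X : EuclideanSpace ℂ (Fin n)) : EuclideanSpace ℂ (Fin n) :=
  WithLp.toLp 2 (fun j => (starRingEnd ℂ) (X j))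

/-- The curvature tensor of the complex quadric in the linear model. -/
def Rbar {n : ℕ} (X Y Z : EuclideanSpace ℂ (Fin n)) : EuclideanSpace ℂ (Fin n) :=
  gQ Y Z • X - gQ X Z • Y + gQ (JQ Y) Z • JQ X - gQ (JQ X) Z • JQ Y
    - ((2 : ℝ) * gQ (JQ X) Y) • JQ Z
    + gQ (AQ Y) Z • AQ X - gQ (AQ X) Z • AQ Y
    + gQ (JQ (AQ Y)) Z • JQ (AQ X) - gQ (JQ (AQ X)) Z • JQ (AQ Y)

/-- The Jacobi operator `R_W = R̄(·, W) W`. -/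
def jacobiOp {n : ℕ} (W X : EuclideanSpace ℂ (Fin n)) : EuclideanSpace ℂ (Fin n) :=
  Rbar X W W

/-! For a unit vector `W` with `⟪A W, W⟫ = 0` (complex inner product, so both `g(AW, W)` and
`g(JAW, W)` vanish), the curvature tensor collapses to
`R_W Z = Z - Re⟪Z, W⟫ W - 3 Im⟪Z, W⟫ JW - ⟪AZ, W⟫ AW`; the two terms in `AW` and `JAW` combine
because `⟪AZ, W⟫ = ∑ Zⱼ Wⱼ` is complex bilinear. The eigenvalues `0, 0, 1, 4` on `W`, `ℂ AW`,
`(ℂW ⊕ ℂAW)^⊥` and `JW` can be read off. For `W = (X + iY)/√2` with `X, Y` real orthonormal,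
`AW = (X - iY)/√2` is orthogonal to `W`, `JX + Y = √2 i AW`, and `ℂW ⊕ ℂAW = ℂX ⊕ ℂY`. -/

open Complex ComplexConjugate
open scoped ComplexInnerProductSpace

namespace ComplexQuadric

variable {n : ℕ}

lemma gQ_JQ_left (U V : EuclideanSpace ℂ (Fin n)) : gQ (JQ U) V = ⟪U, V⟫.im := by
  simp [gQ, JQ, Complex.mul_re]

lemma AQ_add (U V : EuclideanSpace ℂ (Fin n)) : AQ (U + V) = AQ U + AQ V := by
  ext j; simp [AQ]

lemma AQ_smul (c : ℂ) (U : EuclideanSpace ℂ (Fin n)) : AQ (c • U) = conj c • AQ U := by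
  ext j; simp [AQ]

lemma AQ_AQ (U : EuclideanSpace ℂ (Fin n)) : AQ (AQ U) = U := by
  ext j; simp [AQ]

lemma AQ_eq_self_of_im_eq_zero {U : EuclideanSpace ℂ (Fin n)} (h : ∀ j, (U j).im = 0) :
    AQ U = U := by
  ext j; exact conj_eq_iff_im.mpr (h j)

lemma inner_AQ_comm (U V : EuclideanSpace ℂ (Fin n)) : ⟪AQ U, V⟫ = ⟪AQ V, U⟫ := by
  simp [AQ, PiLp.inner_apply, mul_comm]

variable {W : EuclideanSpace ℂ (Fin n)}

theorem jacobiOp_eq (hWW : ⟪W, W⟫ = 1) (hAW : ⟪AQ W, W⟫ = 0) (Z : EuclideanSpace ℂ (Fin n)) :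
    jacobiOp W Z = Z - ⟪Z, W⟫.re • W - (3 * ⟪Z, W⟫.im) • (I • W) - ⟪AQ Z, W⟫ • AQ W := by
  obtain ⟨b, hb⟩ : ∃ b, ⟪AQ Z, W⟫ = b := ⟨_, rfl⟩
  rw [jacobiOp, Rbar]
  simp only [gQ_JQ_left]
  simp only [gQ, JQ, hWW, hAW, hb, one_re, one_im, zero_re, zero_im]
  have hsplit : b • AQ W = b.re • AQ W + b.im • (I • AQ W) := by
    conv_lhs => rw [← re_add_im b]
    rw [add_smul, mul_smul, coe_smul, coe_smul]
  rw [hsplit]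
  module

section Isotropic

variable (hWW : ⟪W, W⟫ = 1) (hAW : ⟪AQ W, W⟫ = 0)
include hWW hAW

theorem jacobiOp_self : jacobiOp W W = 0 := by
  rw [jacobiOp_eq hWW hAW, hWW, hAW]
  simp

theorem jacobiOp_smul_AQ (d : ℂ) : jacobiOp W (d • AQ W) = 0 := by
  rw [jacobiOp_eq hWW hAW, AQ_smul, AQ_AQ, inner_smul_left, inner_smul_left, hWW, hAW]
  simp

theorem jacobiOp_of_orthogonal {Z : EuclideanSpace ℂ (Fin n)} (hZW : ⟪Z, W⟫ = 0)
    (hZAW : ⟪Z, AQ W⟫ = 0) : jacobiOp W Z = Z := by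
  rw [jacobiOp_eq hWW hAW, hZW, inner_AQ_comm, ← inner_conj_symm, hZAW]
  simp

theorem jacobiOp_I_smul_self : jacobiOp W (I • W) = (4 : ℝ) • (I • W) := by
  rw [jacobiOp_eq hWW hAW, AQ_smul, inner_smul_left, inner_smul_left, hWW, hAW]
  simp only [conj_I, map_neg, neg_neg, mul_one, mul_zero, zero_smul, sub_zero, neg_re, neg_im,
    I_re, I_im]
  module

end Isotropic

section RealOrthonormal

variable {X Y : EuclideanSpace ℂ (Fin n)}

lemma AQ_add_I_smul (hAX : AQ X = X) (hAY : AQ Y = Y) : AQ (X + I • Y) = X - I • Y := by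
  rw [AQ_add, AQ_smul, hAX, hAY, conj_I, neg_smul, sub_eq_add_neg]

variable (hX : ‖X‖ = 1) (hY : ‖Y‖ = 1) (hXY : ⟪X, Y⟫ = 0)
include hX hY hXY

lemma inner_add_I_smul_self : ⟪X + I • Y, X + I • Y⟫ = 2 := by
  have hYX : ⟪Y, X⟫ = 0 := inner_eq_zero_symm.mp hXY
  simp only [inner_add_left, inner_add_right, inner_smul_left, inner_smul_right,
    inner_self_eq_one_of_norm_eq_one hX, inner_self_eq_one_of_norm_eq_one hY, hXY, hYX, conj_I]
  linear_combination -I_sq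

lemma inner_sub_I_smul_add_I_smul : ⟪X - I • Y, X + I • Y⟫ = 0 := by
  have hYX : ⟪Y, X⟫ = 0 := inner_eq_zero_symm.mp hXY
  simp only [inner_sub_left, inner_add_right, inner_smul_left, inner_smul_right,
    inner_self_eq_one_of_norm_eq_one hX, inner_self_eq_one_of_norm_eq_one hY, hXY, hYX, conj_I]
  linear_combination I_sq

end RealOrthonormal

lemma inner_sqrt_two_inv_smul (U V : EuclideanSpace ℂ (Fin n)) :
    ⟪(√2)⁻¹ • U, (√2)⁻¹ • V⟫ = ⟪U, V⟫ / 2 := by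
  rw [← coe_smul, ← coe_smul, inner_smul_left, inner_smul_right, conj_ofReal, ← mul_assoc,
    ← ofReal_mul, ← mul_inv, Real.mul_self_sqrt zero_le_two]
  push_cast
  ring

end ComplexQuadric

open ComplexQuadric in
theorem jacobi_operator_isotropic_singular_vector
    (n : ℕ) (X Y : EuclideanSpace ℂ (Fin n))
    (hXreal : ∀ j, (X j).im = 0) (hYreal : ∀ j, (Y j).im = 0)
    (hX : ‖X‖ = 1) (hY : ‖Y‖ = 1) (hXY : (inner ℂ X Y : ℂ) = 0)
    (W : EuclideanSpace ℂ (Fin n))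
    (hW : W = (Real.sqrt 2)⁻¹ • (X + Complex.I • Y)) :
    jacobiOp W W = 0 ∧
    (∀ c : ℂ, jacobiOp W (c • (Complex.I • X + Y)) = 0) ∧
    (∀ Z : EuclideanSpace ℂ (Fin n),
      (inner ℂ Z X : ℂ) = 0 → (inner ℂ Z Y : ℂ) = 0 → jacobiOp W Z = Z) ∧
    jacobiOp W (Complex.I • W) = (4 : ℝ) • (Complex.I • W) := by
  have hAW : AQ W = (√2)⁻¹ • (X - I • Y) := by
    rw [hW, ← coe_smul, AQ_smul, conj_ofReal, coe_smul,
      AQ_add_I_smul (AQ_eq_self_of_im_eq_zero hXreal) (AQ_eq_self_of_im_eq_zero hYreal)]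
  have hWW : ⟪W, W⟫ = 1 := by
    rw [hW, inner_sqrt_two_inv_smul, inner_add_I_smul_self hX hY hXY, div_self two_ne_zero]
  have hAWW : ⟪AQ W, W⟫ = 0 := by
    rw [hAW, hW, inner_sqrt_two_inv_smul, inner_sub_I_smul_add_I_smul hX hY hXY, zero_div]
  refine ⟨jacobiOp_self hWW hAWW, fun c => ?_, fun Z hZX hZY => ?_, jacobiOp_I_smul_self hWW hAWW⟩
  · have hline : c • (I • X + Y) = (c * I * √2) • AQ W := by
      rw [hAW, ← coe_smul, smul_smul, mul_assoc (c * I), ← ofReal_mul,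
        mul_inv_cancel₀ (by positivity), ofReal_one, mul_one]
      linear_combination (norm := module) (c * I_sq) • Y
    rw [hline]
    exact jacobiOp_smul_AQ hWW hAWW _
  · apply jacobiOp_of_orthogonal hWW hAWW
    · simp [hW, hZX, hZY]
    · simp [hAW, hZX, hZY]
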